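/- For x ∈ (0, π/2) and t ∈ [−1, 1], |arctan(t · tan x) − t·x| ≤ |t|·(tan x − x). In particular, the pinhole-model azimuth arctan(((i_x − c_x)/f_I)) and the linear approximation ((i_x − c_x)/w)·f_x (with f_I = w/(2 tan(f_x/2)), c_x = w/2, t = (i_x − c_x)/(w/2), x = f_x/2) differ by at most tan(f_x/2) − f_x/2. -/

import Mathlib

/-! Since `tan` is convex on `[0, π/2)` and vanishes at `0`, `tan (t x) ≤ t tan x` for `t ∈ [0, 1]`;
applying the increasing function `arctan` gives `t x ≤ arctan (t tan x)`, while `arctan u ≤ u` for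
`u ≥ 0` gives `arctan (t tan x) ≤ t tan x`. The error `arctan (t tan x) - t x` thus lies in
`[0, t (tan x - x)]`, and it is odd in `t`. The pinhole statement is the case
`t = (i_x - w/2)/(w/2)`, `x = f_x/2`. -/

open Real

namespace Real

lemma convexOn_tan : ConvexOn ℝ (Set.Ico 0 (π / 2)) tan := by
  have hcos_pos : ∀ y ∈ Set.Ico 0 (π / 2), 0 < cos y := fun y hy =>
    cos_pos_of_mem_Ioo ⟨by linarith [hy.1, pi_pos], hy.2⟩
  refine MonotoneOn.convexOn_of_deriv (convex_Ico 0 (π / 2)) ?_ ?_ ?_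
  · exact continuousOn_tan.mono fun y hy => (hcos_pos y hy).ne'
  · exact fun y hy => (differentiableAt_tan.2
      (hcos_pos y (interior_subset hy)).ne').differentiableWithinAt
  · rw [interior_Ico]
    intro y hy z hz hyz
    simp only [deriv_tan]
    have hcz := hcos_pos z (Set.Ioo_subset_Ico_self hz)
    have hzy : cos z ≤ cos y :=
      cos_le_cos_of_nonneg_of_le_pi hy.1.le (by linarith [hz.2, pi_pos]) hyz
    gcongr

lemma tan_mul_le_mul_tan {x t : ℝ} (hx₀ : 0 ≤ x) (hx : x < π / 2) (ht₀ : 0 ≤ t) (ht₁ : t ≤ 1) :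
    tan (t * x) ≤ t * tan x := by
  have h := convexOn_tan.2 (x := x) (y := 0) ⟨hx₀, hx⟩ ⟨le_rfl, by positivity⟩ ht₀
    (sub_nonneg.2 ht₁) (by ring)
  simpa using h

lemma arctan_le_self {u : ℝ} (hu : 0 ≤ u) : arctan u ≤ u := by
  calc arctan u ≤ tan (arctan u) := le_tan (arctan_nonneg.2 hu) (arctan_lt_pi_div_two u)
    _ = u := tan_arctan u

lemma mul_le_arctan_mul_tan {x t : ℝ} (hx₀ : 0 ≤ x) (hx : x < π / 2) (ht₀ : 0 ≤ t)
    (ht₁ : t ≤ 1) : t * x ≤ arctan (t * tan x) := by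
  have htx : t * x ≤ x := mul_le_of_le_one_left hx₀ ht₁
  calc t * x = arctan (tan (t * x)) :=
        (arctan_tan (by nlinarith [pi_pos]) (by linarith)).symm
    _ ≤ arctan (t * tan x) := arctan_le_arctan_iff.2 (tan_mul_le_mul_tan hx₀ hx ht₀ ht₁)

lemma abs_arctan_mul_tan_sub_mul_le {x t : ℝ} (hx₀ : 0 ≤ x) (hx : x < π / 2) (ht : |t| ≤ 1) :
    |arctan (t * tan x) - t * x| ≤ |t| * (tan x - x) := by
  have key : ∀ s, 0 ≤ s → s ≤ 1 → |arctan (s * tan x) - s * x| ≤ s * (tan x - x) := by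
    intro s hs₀ hs₁
    have hlow := mul_le_arctan_mul_tan hx₀ hx hs₀ hs₁
    have hup := arctan_le_self (mul_nonneg hs₀ (tan_nonneg_of_nonneg_of_le_pi_div_two hx₀ hx.le))
    rw [abs_of_nonneg (sub_nonneg.2 hlow)]
    linarith
  rcases le_total 0 t with h | h
  · rw [abs_of_nonneg h] at ht ⊢
    exact key t h ht
  · rw [abs_of_nonpos h] at ht ⊢
    have := key (-t) (neg_nonneg.2 h) ht
    rwa [neg_mul, arctan_neg, neg_mul, neg_sub_neg, abs_sub_comm] at this

end Real

theorem arctan_linear_approx_bound :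
    (∀ x : ℝ, x ∈ Set.Ioo 0 (π / 2) → ∀ t : ℝ, t ∈ Set.Icc (-1 : ℝ) 1 →
      |Real.arctan (t * Real.tan x) - t * x| ≤ |t| * (Real.tan x - x)) ∧
    (∀ w fx ix : ℝ, 0 < w → fx / 2 ∈ Set.Ioo 0 (π / 2) → ix ∈ Set.Icc 0 w →
      |Real.arctan ((ix - w / 2) / (w / (2 * Real.tan (fx / 2)))) -
          ((ix - w / 2) / w) * fx| ≤ Real.tan (fx / 2) - fx / 2) := by
  refine ⟨fun x hx t ht => abs_arctan_mul_tan_sub_mul_le hx.1.le hx.2 (abs_le.2 ht), ?_⟩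
  intro w fx ix hw hx hix
  set x := fx / 2
  set t := (ix - w / 2) / (w / 2)
  have ht : |t| ≤ 1 := by
    rw [abs_div, abs_of_pos (half_pos hw), div_le_one (half_pos hw), abs_le]
    constructor <;> linarith [hix.1, hix.2]
  have harg : (ix - w / 2) / (w / (2 * tan x)) = t * tan x := by
    simp only [t]; field_simp
  have hlin : (ix - w / 2) / w * fx = t * x := by
    simp only [t, x]; field_simp
  rw [harg, hlin]
  calc |arctan (t * tan x) - t * x| ≤ |t| * (tan x - x) :=
        abs_arctan_mul_tan_sub_mul_le hx.1.le hx.2 ht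
    _ ≤ tan x - x := mul_le_of_le_one_left (sub_nonneg.2 (le_tan hx.1.le hx.2)) ht
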